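/- Consider the planar flexible-joint robot with Hamiltonian H(q,p) = (1/2)p^T M(q_{l2})^{-1} p + (1/2)(q_l−q_m)^T K_s (q_l−q_m), parameters a1,a2,b > 0 with a1·a2 > b², I_m1,I_m2 > 0, K_s and K_I symmetric positive definite, and q_* ∈ ℝ². Let (q(t),p(t)) be a differentiable solution of the closed-loop system (q̇,ṗ) = [[0_{4×4}, I_4], [−I_4, J_PI2 − R_PI2]] ∇H_PI(q,p) with H_PI(q,p) = H(q,p) + (1/2)(q_m−q_*)^T K_I(q_m−q_*). If p(t) = 0 for all t, then q_l(t) = q_m(t) = q_* for all t. -/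

import Mathlib

open Matrix

noncomputable section

abbrev I4 := Fin 2 ⊕ Fin 2
abbrev I8 := I4 ⊕ I4
abbrev E8 := EuclideanSpace ℝ I8

/-- Link inertia matrix `M_l(θ)`. -/
def Ml (a1 a2 b θ : ℝ) : Matrix (Fin 2) (Fin 2) ℝ :=
  !![a1 + a2 + 2 * b * Real.cos θ, a2 + b * Real.cos θ;
     a2 + b * Real.cos θ, a2]

/-- Full inertia matrix `M(θ) = blockdiag(M_l(θ), diag(I_m1, I_m2))`. -/
def Mfull (a1 a2 b Im1 Im2 θ : ℝ) : Matrix I4 I4 ℝ :=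
  Matrix.fromBlocks (Ml a1 a2 b θ) 0 0 (Matrix.diagonal ![Im1, Im2])

def qlv (x : E8) : Fin 2 → ℝ := fun i => x (Sum.inl (Sum.inl i))
def qmv (x : E8) : Fin 2 → ℝ := fun i => x (Sum.inl (Sum.inr i))
def pvec (x : E8) : I4 → ℝ := fun j => x (Sum.inr j)
/-- The second link angle `q_{l2}`. -/
def ql2 (x : E8) : ℝ := x (Sum.inl (Sum.inl 1))

/-- The robot Hamiltonian
`H(q,p) = (1/2) p^T M(q_{l2})⁻¹ p + (1/2)(q_l − q_m)^T K_s (q_l − q_m)`. -/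
def Hrobot (a1 a2 b Im1 Im2 : ℝ) (Ks : Matrix (Fin 2) (Fin 2) ℝ) (x : E8) : ℝ :=
  (1 / 2 : ℝ) * (pvec x ⬝ᵥ ((Mfull a1 a2 b Im1 Im2 (ql2 x))⁻¹).mulVec (pvec x)) +
  (1 / 2 : ℝ) * ((fun i => qlv x i - qmv x i) ⬝ᵥ Ks.mulVec fun i => qlv x i - qmv x i)

/-- `H_PI(q,p) = H(q,p) + (1/2)(q_m − q_*)^T K_I (q_m − q_*)`. -/
def HPIrobot (a1 a2 b Im1 Im2 : ℝ) (Ks KI : Matrix (Fin 2) (Fin 2) ℝ)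
    (qstar : Fin 2 → ℝ) (x : E8) : ℝ :=
  Hrobot a1 a2 b Im1 Im2 Ks x + (1 / 2 : ℝ) *
    ((fun i => qmv x i - qstar i) ⬝ᵥ KI.mulVec fun i => qmv x i - qstar i)

def RPI2 (Dl Dm Kpm Kpl : Matrix (Fin 2) (Fin 2) ℝ) : Matrix I4 I4 ℝ :=
  Matrix.fromBlocks Dl ((1 / 2 : ℝ) • Kplᵀ) ((1 / 2 : ℝ) • Kpl) (Dm + Kpm)

def JPI2 (Kpl : Matrix (Fin 2) (Fin 2) ℝ) : Matrix I4 I4 ℝ :=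
  (1 / 2 : ℝ) • Matrix.fromBlocks 0 Kplᵀ (-Kpl) 0


/-! ### Auxiliary lemmas -/

section AuxLemmas

lemma euclid_abs_coord_le {ι : Type*} [Fintype ι] (v : EuclideanSpace ℝ ι) (i : ι) :
    |v i| ≤ ‖v‖ := by
  have h : ‖v i‖ ^ 2 ≤ ∑ j, ‖v j‖ ^ 2 :=
    Finset.single_le_sum (f := fun j => ‖v j‖ ^ 2) (fun j _ => sq_nonneg _) (Finset.mem_univ i)
  calc |v i| = Real.sqrt (‖v i‖ ^ 2) := by
        rw [Real.sqrt_sq (norm_nonneg _), Real.norm_eq_abs]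
    _ ≤ Real.sqrt (∑ j, ‖v j‖ ^ 2) := Real.sqrt_le_sqrt h
    _ = ‖v‖ := (EuclideanSpace.norm_eq v).symm

lemma isLittleO_bilin' {E : Type*} [NormedAddCommGroup E] [NormedSpace ℝ E]
    {n : Type*} [Fintype n] (N : E → Matrix n n ℝ) {x₀ : E}
    (hN : ContinuousAt N x₀) (φ : E → n → ℝ)
    (hφ : ∀ h i, |φ h i| ≤ ‖h‖) :
    (fun h => φ h ⬝ᵥ (N (x₀ + h)).mulVec (φ h)) =o[nhds (0 : E)] (fun h => h) := by
  rw [Asymptotics.isLittleO_iff]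
  intro c hc
  set C : ℝ := (∑ i, ∑ j, |N x₀ i j|) + 1 with hCdef
  have hCpos : 0 < C := by
    have : (0:ℝ) ≤ ∑ i, ∑ j, |N x₀ i j| :=
      Finset.sum_nonneg fun i _ => Finset.sum_nonneg fun j _ => abs_nonneg _
    linarith
  have hsum_cont : Continuous fun M : Matrix n n ℝ => ∑ i, ∑ j, |M i j| := by
    refine continuous_finset_sum _ fun i _ => continuous_finset_sum _ fun j _ => ?_
    exact ((continuous_apply j).comp (continuous_apply i)).abs
  have htend : Filter.Tendsto (fun h : E => ∑ i, ∑ j, |N (x₀ + h) i j|) (nhds 0)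
      (nhds (∑ i, ∑ j, |N x₀ i j|)) := by
    refine (hsum_cont.tendsto _).comp ?_
    have : Filter.Tendsto (fun h : E => x₀ + h) (nhds 0) (nhds x₀) := by
      simpa using (continuous_add_left x₀).tendsto (0 : E)
    exact (hN.tendsto).comp this
  have h1 : ∀ᶠ h in nhds (0 : E), (∑ i, ∑ j, |N (x₀ + h) i j|) ≤ C :=
    (htend.eventually_lt_const (by linarith : (∑ i, ∑ j, |N x₀ i j|) < C)).mono
      fun y hy => le_of_lt hy
  have h2 : ∀ᶠ h in nhds (0 : E), ‖h‖ < c / C := by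
    have : Filter.Tendsto (fun h : E => ‖h‖) (nhds 0) (nhds 0) := by
      simpa using continuous_norm.tendsto (0 : E)
    exact this.eventually_lt_const (by positivity)
  filter_upwards [h1, h2] with h hb hr
  have hr0 : (0:ℝ) ≤ ‖h‖ := norm_nonneg _
  have inner : ∀ i, |∑ j, N (x₀ + h) i j * φ h j| ≤ ∑ j, |N (x₀ + h) i j| * ‖h‖ := by
    intro i
    refine (Finset.abs_sum_le_sum_abs _ _).trans (Finset.sum_le_sum fun j _ => ?_)
    rw [abs_mul]
    exact mul_le_mul_of_nonneg_left (hφ h j) (abs_nonneg _)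
  have key : |φ h ⬝ᵥ (N (x₀ + h)).mulVec (φ h)|
      ≤ (∑ i, ∑ j, |N (x₀ + h) i j|) * (‖h‖ * ‖h‖) := by
    rw [dotProduct]
    calc |∑ i, φ h i * (N (x₀ + h)).mulVec (φ h) i|
        ≤ ∑ i, |φ h i * (N (x₀ + h)).mulVec (φ h) i| := Finset.abs_sum_le_sum_abs _ _
      _ ≤ ∑ i, ∑ j, |N (x₀ + h) i j| * (‖h‖ * ‖h‖) := by
          refine Finset.sum_le_sum fun i _ => ?_
          have : |φ h i * (N (x₀ + h)).mulVec (φ h) i|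
              ≤ ‖h‖ * (∑ j, |N (x₀ + h) i j| * ‖h‖) := by
            rw [abs_mul]
            refine mul_le_mul (hφ h i) ?_ (abs_nonneg _) hr0
            simpa [Matrix.mulVec, dotProduct] using inner i
          refine this.trans (le_of_eq ?_)
          rw [Finset.mul_sum]
          exact Finset.sum_congr rfl fun j _ => by ring
      _ = (∑ i, ∑ j, |N (x₀ + h) i j|) * (‖h‖ * ‖h‖) := by
          rw [Finset.sum_mul]
          exact Finset.sum_congr rfl fun i _ => by rw [Finset.sum_mul]
  have hkey2 : |φ h ⬝ᵥ (N (x₀ + h)).mulVec (φ h)| ≤ C * (‖h‖ * ‖h‖) :=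
    key.trans (mul_le_mul_of_nonneg_right hb (by positivity))
  have h3 : C * (‖h‖ * ‖h‖) ≤ c * ‖h‖ := by
    have : C * ‖h‖ ≤ c := by
      have := mul_le_mul_of_nonneg_left (le_of_lt hr) (le_of_lt hCpos)
      calc C * ‖h‖ ≤ C * (c / C) := this
        _ = c := by field_simp
    nlinarith
  simpa [Real.norm_eq_abs] using hkey2.trans h3

/-- the linear functional `u ↦ w ⬝ᵥ S u` -/
def dotSL {n : Type*} [Fintype n] [DecidableEq n] (S : Matrix n n ℝ) (w : n → ℝ) :
    (n → ℝ) →L[ℝ] ℝ :=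
  LinearMap.toContinuousLinearMap
    { toFun := fun u => w ⬝ᵥ S.mulVec u
      map_add' := fun u v => by simp [Matrix.mulVec_add, dotProduct_add]
      map_smul' := fun c u => by simp [Matrix.mulVec_smul, dotProduct_smul] }

@[simp] lemma dotSL_apply {n : Type*} [Fintype n] [DecidableEq n] (S : Matrix n n ℝ)
    (w u : n → ℝ) : dotSL S w u = w ⬝ᵥ S.mulVec u := rfl

lemma dot_mulVec_symm {n : Type*} [Fintype n] {S : Matrix n n ℝ} (hS : Sᵀ = S)
    (a b : n → ℝ) : a ⬝ᵥ S.mulVec b = b ⬝ᵥ S.mulVec a := by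
  nth_rewrite 1 [← hS]
  rw [Matrix.dotProduct_mulVec, Matrix.vecMul_transpose, dotProduct_comm]

lemma hasFDerivAt_quadform {n : Type*} [Fintype n] [DecidableEq n]
    (S : Matrix n n ℝ) (hS : Sᵀ = S) (u : n → ℝ) :
    HasFDerivAt (fun v => (1 / 2 : ℝ) * (v ⬝ᵥ S.mulVec v)) (dotSL S u) u := by
  rw [hasFDerivAt_iff_isLittleO_nhds_zero]
  have heq : (fun v : n → ℝ => (1/2:ℝ) * ((u + v) ⬝ᵥ S.mulVec (u + v))
        - (1/2:ℝ) * (u ⬝ᵥ S.mulVec u) - dotSL S u v)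
      = fun v => (1/2:ℝ) * (v ⬝ᵥ S.mulVec v) := by
    funext v
    have h1 := dot_mulVec_symm hS u v
    simp only [dotSL_apply, Matrix.mulVec_add, dotProduct_add, add_dotProduct]
    linarith
  rw [heq]
  have hb : ∀ (h : n → ℝ) (i : n), |h i| ≤ ‖h‖ := fun h i => by
    simpa [Real.norm_eq_abs] using norm_le_pi_norm h i
  exact Asymptotics.IsLittleO.const_mul_left
    (by
      have := isLittleO_bilin' (x₀ := (0 : n → ℝ)) (fun _ => S) continuousAt_const
        (fun v => v) hb
      simpa using this) _

lemma hasFDerivAt_quadform_comp {E : Type*} [NormedAddCommGroup E] [NormedSpace ℝ E]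
    {n : Type*} [Fintype n] [DecidableEq n]
    (S : Matrix n n ℝ) (hS : Sᵀ = S) (B : E →L[ℝ] (n → ℝ)) (c : n → ℝ) (x : E) :
    HasFDerivAt (fun y => (1 / 2 : ℝ) * ((B y + c) ⬝ᵥ S.mulVec (B y + c)))
      ((dotSL S (B x + c)).comp B) x := by
  have haff : HasFDerivAt (fun y => B y + c) B x := B.hasFDerivAt.add_const c
  exact (hasFDerivAt_quadform S hS (B x + c)).comp x haff

lemma det_Mfull_pos {a1 a2 b Im1 Im2 : ℝ} (hab : b ^ 2 < a1 * a2)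
    (hIm1 : 0 < Im1) (hIm2 : 0 < Im2) (θ : ℝ) :
    0 < (Mfull a1 a2 b Im1 Im2 θ).det := by
  rw [Mfull, Matrix.det_fromBlocks_zero₂₁, Matrix.det_diagonal]
  have hMl : (Ml a1 a2 b θ).det = a1 * a2 - (b * Real.cos θ) ^ 2 := by
    rw [Ml, Matrix.det_fin_two_of]; ring
  have hprod : (∏ i, (![Im1, Im2] : Fin 2 → ℝ) i) = Im1 * Im2 := by
    simp [Fin.prod_univ_two]
  rw [hMl, hprod]
  have h1 := Real.neg_one_le_cos θ
  have h2 := Real.cos_le_one θ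
  have hc2 : Real.cos θ ^ 2 ≤ 1 := by nlinarith
  have h3 : (b * Real.cos θ) ^ 2 ≤ b ^ 2 := by nlinarith [sq_nonneg b]
  have : 0 < a1 * a2 - (b * Real.cos θ) ^ 2 := by nlinarith
  positivity

lemma continuous_Mfull (a1 a2 b Im1 Im2 : ℝ) :
    Continuous fun θ : ℝ => Mfull a1 a2 b Im1 Im2 θ := by
  refine continuous_matrix fun i j => ?_
  cases i with
  | inl i =>
    cases j with
    | inl j =>
      simp only [Mfull, Matrix.fromBlocks_apply₁₁]
      fin_cases i <;> fin_cases j <;> simp [Ml] <;> fun_prop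
    | inr j => simp only [Mfull, Matrix.fromBlocks_apply₁₂]; exact continuous_const
  | inr i =>
    cases j with
    | inl j => simp only [Mfull, Matrix.fromBlocks_apply₂₁]; exact continuous_const
    | inr j => simp only [Mfull, Matrix.fromBlocks_apply₂₂]; exact continuous_const

lemma continuousAt_Ninv {a1 a2 b Im1 Im2 : ℝ} (hab : b ^ 2 < a1 * a2)
    (hIm1 : 0 < Im1) (hIm2 : 0 < Im2) (x₀ : E8) :
    ContinuousAt (fun y : E8 => (Mfull a1 a2 b Im1 Im2 (ql2 y))⁻¹) x₀ := by
  have hql2 : Continuous (ql2 : E8 → ℝ) := by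
    have : Continuous fun y : E8 => y (Sum.inl (Sum.inl 1)) :=
      (EuclideanSpace.proj (Sum.inl (Sum.inl 1) : I8)).continuous
    exact this
  have hM : ContinuousAt (fun y : E8 => Mfull a1 a2 b Im1 Im2 (ql2 y)) x₀ :=
    ((continuous_Mfull a1 a2 b Im1 Im2).comp hql2).continuousAt
  have hinv : ContinuousAt Inv.inv (Mfull a1 a2 b Im1 Im2 (ql2 x₀)) := by
    refine continuousAt_matrix_inv _ ?_
    rw [Ring.inverse_eq_inv']
    exact continuousAt_inv₀ (ne_of_gt (det_Mfull_pos hab hIm1 hIm2 _))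
  exact Filter.Tendsto.comp hinv hM

lemma hasFDerivAt_kin {a1 a2 b Im1 Im2 : ℝ} (hab : b ^ 2 < a1 * a2)
    (hIm1 : 0 < Im1) (hIm2 : 0 < Im2) {x₀ : E8} (hp0 : pvec x₀ = 0) :
    HasFDerivAt
      (fun y : E8 => (1 / 2 : ℝ) *
        (pvec y ⬝ᵥ ((Mfull a1 a2 b Im1 Im2 (ql2 y))⁻¹).mulVec (pvec y)))
      (0 : E8 →L[ℝ] ℝ) x₀ := by
  rw [hasFDerivAt_iff_isLittleO_nhds_zero]
  have hx0r : ∀ j : I4, x₀ (Sum.inr j) = 0 := fun j => congrFun hp0 j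
  have heq : (fun h : E8 => (1/2:ℝ) *
        (pvec (x₀ + h) ⬝ᵥ ((Mfull a1 a2 b Im1 Im2 (ql2 (x₀ + h)))⁻¹).mulVec (pvec (x₀ + h)))
        - (1/2:ℝ) * (pvec x₀ ⬝ᵥ ((Mfull a1 a2 b Im1 Im2 (ql2 x₀))⁻¹).mulVec (pvec x₀))
        - (0 : E8 →L[ℝ] ℝ) h)
      = fun h : E8 => (1/2:ℝ) *
        (pvec (x₀ + h) ⬝ᵥ ((Mfull a1 a2 b Im1 Im2 (ql2 (x₀ + h)))⁻¹).mulVec (pvec (x₀ + h))) := by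
    funext h
    rw [hp0]
    simp
  rw [heq]
  refine Asymptotics.IsLittleO.const_mul_left ?_ _
  have hφ : ∀ (h : E8) (i : I4), |pvec (x₀ + h) i| ≤ ‖h‖ := by
    intro h i
    have : pvec (x₀ + h) i = h (Sum.inr i) := by
      show (x₀ + h) (Sum.inr i) = h (Sum.inr i)
      simp [hx0r i]
    rw [this]
    exact euclid_abs_coord_le h _
  exact isLittleO_bilin' (fun y => (Mfull a1 a2 b Im1 Im2 (ql2 y))⁻¹)
    (continuousAt_Ninv hab hIm1 hIm2 x₀) (fun h => pvec (x₀ + h)) hφ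

/-- `B1 y = q_l - q_m`. -/
def B1 : E8 →L[ℝ] (Fin 2 → ℝ) :=
  LinearMap.toContinuousLinearMap
    { toFun := fun y i => y (Sum.inl (Sum.inl i)) - y (Sum.inl (Sum.inr i))
      map_add' := fun y z => by
        funext i
        simp [PiLp.add_apply]
        ring
      map_smul' := fun c y => by
        funext i
        simp [PiLp.smul_apply, smul_eq_mul]
        ring }

/-- `B2 y = q_m`. -/
def B2 : E8 →L[ℝ] (Fin 2 → ℝ) :=
  LinearMap.toContinuousLinearMap
    { toFun := fun y i => y (Sum.inl (Sum.inr i))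
      map_add' := fun y z => by funext i; simp [PiLp.add_apply]
      map_smul' := fun c y => by funext i; simp [PiLp.smul_apply, smul_eq_mul] }

@[simp] lemma B1_apply (y : E8) (i : Fin 2) :
    B1 y i = y (Sum.inl (Sum.inl i)) - y (Sum.inl (Sum.inr i)) := rfl
@[simp] lemma B2_apply (y : E8) (i : Fin 2) : B2 y i = y (Sum.inl (Sum.inr i)) := rfl

lemma HPI_decomp (a1 a2 b Im1 Im2 : ℝ) (Ks KI : Matrix (Fin 2) (Fin 2) ℝ)
    (qstar : Fin 2 → ℝ) :
    HPIrobot a1 a2 b Im1 Im2 Ks KI qstar = fun y =>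
      ((1 / 2 : ℝ) * (pvec y ⬝ᵥ ((Mfull a1 a2 b Im1 Im2 (ql2 y))⁻¹).mulVec (pvec y))
      + (1 / 2 : ℝ) * ((B1 y + 0) ⬝ᵥ Ks.mulVec (B1 y + 0)))
      + (1 / 2 : ℝ) * ((B2 y + (-qstar)) ⬝ᵥ KI.mulVec (B2 y + (-qstar))) := by
  funext y
  have h1 : (B1 y + 0 : Fin 2 → ℝ) = fun i => qlv y i - qmv y i := by
    funext i; simp [qlv, qmv]
  have h2 : (B2 y + (-qstar) : Fin 2 → ℝ) = fun i => qmv y i - qstar i := by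
    funext i; simp [qmv, sub_eq_add_neg]
  rw [HPIrobot, Hrobot, h1, h2]

lemma gradient_coords (a1 a2 b Im1 Im2 : ℝ)
    (hab : b ^ 2 < a1 * a2) (hIm1 : 0 < Im1) (hIm2 : 0 < Im2)
    (Ks KI : Matrix (Fin 2) (Fin 2) ℝ) (hKs : Ksᵀ = Ks) (hKI : KIᵀ = KI)
    (qstar : Fin 2 → ℝ) (x₀ : E8) (hp0 : pvec x₀ = 0) :
    (∀ i, gradient (HPIrobot a1 a2 b Im1 Im2 Ks KI qstar) x₀ (Sum.inl (Sum.inl i))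
        = Ks.mulVec (fun r => qlv x₀ r - qmv x₀ r) i) ∧
    (∀ i, gradient (HPIrobot a1 a2 b Im1 Im2 Ks KI qstar) x₀ (Sum.inl (Sum.inr i))
        = - Ks.mulVec (fun r => qlv x₀ r - qmv x₀ r) i
          + KI.mulVec (fun r => qmv x₀ r - qstar r) i) ∧
    (∀ j, gradient (HPIrobot a1 a2 b Im1 Im2 Ks KI qstar) x₀ (Sum.inr j) = 0) := by
  set L : E8 →L[ℝ] ℝ :=
    ((0 : E8 →L[ℝ] ℝ) + (dotSL Ks (B1 x₀ + 0)).comp B1)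
      + (dotSL KI (B2 x₀ + (-qstar))).comp B2 with hL
  have hF : HasFDerivAt (HPIrobot a1 a2 b Im1 Im2 Ks KI qstar) L x₀ := by
    rw [HPI_decomp]
    exact ((hasFDerivAt_kin hab hIm1 hIm2 hp0).add
      (hasFDerivAt_quadform_comp Ks hKs B1 0 x₀)).add
      (hasFDerivAt_quadform_comp KI hKI B2 (-qstar) x₀)
  have hgrad : gradient (HPIrobot a1 a2 b Im1 Im2 Ks KI qstar) x₀
      = (InnerProductSpace.toDual ℝ E8).symm L :=
    HasGradientAt.gradient (hasFDerivAt_iff_hasGradientAt.mp hF)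
  have hcoord : ∀ k : I8,
      gradient (HPIrobot a1 a2 b Im1 Im2 Ks KI qstar) x₀ k = L (EuclideanSpace.single k 1) := by
    intro k
    rw [hgrad]
    have h2 := InnerProductSpace.toDual_symm_apply (𝕜 := ℝ) (E := E8) (y := L)
      (x := EuclideanSpace.single k 1)
    rw [← h2, EuclideanSpace.inner_single_right]
    simp
  -- symmetry helper
  have hdot : ∀ (S : Matrix (Fin 2) (Fin 2) ℝ), Sᵀ = S → ∀ (w : Fin 2 → ℝ) (i : Fin 2),
      w ⬝ᵥ S.mulVec (Pi.single i 1) = S.mulVec w i := by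
    intro S hS w i
    rw [Matrix.dotProduct_mulVec]
    nth_rewrite 1 [← hS]
    rw [Matrix.vecMul_transpose, dotProduct_single, mul_one]
  refine ⟨fun i => ?_, fun i => ?_, fun j => ?_⟩
  · rw [hcoord]
    have e1 : B1 (EuclideanSpace.single (Sum.inl (Sum.inl i) : I8) 1) = Pi.single i 1 := by
      funext r
      simp [EuclideanSpace.single_apply, Pi.single_apply]
    have e2 : B2 (EuclideanSpace.single (Sum.inl (Sum.inl i) : I8) 1) = 0 := by
      funext r
      simp [EuclideanSpace.single_apply]
    have h1 : (B1 x₀ + 0 : Fin 2 → ℝ) = fun r => qlv x₀ r - qmv x₀ r := by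
      funext r; simp [qlv, qmv]
    rw [hL]
    simp only [ContinuousLinearMap.add_apply, ContinuousLinearMap.zero_apply,
      ContinuousLinearMap.comp_apply, dotSL_apply, e1, e2, h1,
      Matrix.mulVec_zero, dotProduct_zero, add_zero, zero_add]
    exact hdot Ks hKs _ i
  · rw [hcoord]
    have e1 : B1 (EuclideanSpace.single (Sum.inl (Sum.inr i) : I8) 1) = -Pi.single i 1 := by
      funext r
      simp [EuclideanSpace.single_apply, Pi.single_apply]
    have e2 : B2 (EuclideanSpace.single (Sum.inl (Sum.inr i) : I8) 1) = Pi.single i 1 := by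
      funext r
      simp [EuclideanSpace.single_apply, Pi.single_apply]
    have h1 : (B1 x₀ + 0 : Fin 2 → ℝ) = fun r => qlv x₀ r - qmv x₀ r := by
      funext r; simp [qlv, qmv]
    have h2 : (B2 x₀ + (-qstar) : Fin 2 → ℝ) = fun r => qmv x₀ r - qstar r := by
      funext r; simp [qmv, sub_eq_add_neg]
    rw [hL]
    simp only [ContinuousLinearMap.add_apply, ContinuousLinearMap.zero_apply,
      ContinuousLinearMap.comp_apply, dotSL_apply, e1, e2, h1, h2,
      Matrix.mulVec_neg, dotProduct_neg, zero_add]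
    rw [hdot Ks hKs, hdot KI hKI]
  · rw [hcoord]
    have e1 : B1 (EuclideanSpace.single (Sum.inr j : I8) 1) = 0 := by
      funext r; simp [EuclideanSpace.single_apply]
    have e2 : B2 (EuclideanSpace.single (Sum.inr j : I8) 1) = 0 := by
      funext r; simp [EuclideanSpace.single_apply]
    rw [hL]
    simp only [ContinuousLinearMap.add_apply, ContinuousLinearMap.zero_apply,
      ContinuousLinearMap.comp_apply, dotSL_apply, e1, e2,
      Matrix.mulVec_zero, dotProduct_zero, add_zero, zero_add]

lemma posdef_mulVec_eq_zero {n : Type*} [Fintype n] {S : Matrix n n ℝ} (hS : S.PosDef)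
    {u : n → ℝ} (h : S.mulVec u = 0) : u = 0 := by
  by_contra hu
  have := hS.dotProduct_mulVec_pos hu
  rw [h] at this
  simp at this

end AuxLemmas

/-- the LaSalle-type implication (14): along any solution of the
PI closed-loop system `(q̇,ṗ) = [[0,I₄],[−I₄,J_PI2 − R_PI2]] ∇H_PI(q,p)` of the planar
flexible-joint robot on which the momenta vanish identically, the positions satisfy
`q_l(t) = q_m(t) = q_*` for all `t`. -/
theorem invariant_set_PI (a1 a2 b Im1 Im2 : ℝ)
    (ha1 : 0 < a1) (ha2 : 0 < a2) (hb : 0 < b) (hab : b ^ 2 < a1 * a2)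
    (hIm1 : 0 < Im1) (hIm2 : 0 < Im2)
    (Ks KI : Matrix (Fin 2) (Fin 2) ℝ) (hKs : Ks.PosDef) (hKI : KI.PosDef)
    (dl dm : Fin 2 → ℝ) (hdl : ∀ i, 0 < dl i) (hdm : ∀ i, 0 < dm i)
    (Kpl Kpm : Matrix (Fin 2) (Fin 2) ℝ)
    (qstar : Fin 2 → ℝ)
    (x : ℝ → E8)
    (hx : ∀ t, HasDerivAt x
      (WithLp.toLp 2 ((Matrix.fromBlocks (0 : Matrix I4 I4 ℝ) 1 (-1)
          (JPI2 Kpl - RPI2 (Matrix.diagonal dl) (Matrix.diagonal dm) Kpm Kpl)).mulVec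
        fun i => gradient (HPIrobot a1 a2 b Im1 Im2 Ks KI qstar) (x t) i)) t)
    (hp : ∀ t, pvec (x t) = 0) :
    ∀ t, qlv (x t) = qstar ∧ qmv (x t) = qstar := by
  have hKs_symm : Ksᵀ = Ks := by
    have := hKs.1
    rwa [Matrix.IsHermitian, Matrix.conjTranspose_eq_transpose_of_trivial] at this
  have hKI_symm : KIᵀ = KI := by
    have := hKI.1
    rwa [Matrix.IsHermitian, Matrix.conjTranspose_eq_transpose_of_trivial] at this
  intro t
  obtain ⟨hg1, hg2, hg3⟩ := gradient_coords a1 a2 b Im1 Im2 hab hIm1 hIm2 Ks KI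
    hKs_symm hKI_symm qstar (x t) (hp t)
  have hvz : ∀ j : I4,
      ((Matrix.fromBlocks (0 : Matrix I4 I4 ℝ) 1 (-1)
          (JPI2 Kpl - RPI2 (Matrix.diagonal dl) (Matrix.diagonal dm) Kpm Kpl)).mulVec
        fun i => gradient (HPIrobot a1 a2 b Im1 Im2 Ks KI qstar) (x t) i) (Sum.inr j) = 0 := by
    intro j
    have h1 := (EuclideanSpace.proj (Sum.inr j : I8)).hasFDerivAt.comp_hasDerivAt t (hx t)
    have h2 : (⇑(EuclideanSpace.proj (Sum.inr j : I8)) ∘ x) = fun _ => (0 : ℝ) := by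
      funext s
      have : x s (Sum.inr j) = 0 := congrFun (hp s) j
      simpa [Function.comp] using this
    rw [h2] at h1
    have h3 := h1.unique (hasDerivAt_const t 0)
    simpa using h3
  have hsplit : (fun i : I8 => gradient (HPIrobot a1 a2 b Im1 Im2 Ks KI qstar) (x t) i)
      = Sum.elim (fun j : I4 => gradient (HPIrobot a1 a2 b Im1 Im2 Ks KI qstar) (x t) (Sum.inl j))
        (fun j : I4 => gradient (HPIrobot a1 a2 b Im1 Im2 Ks KI qstar) (x t) (Sum.inr j)) := by
    funext i; cases i <;> rfl
  have hbot : (fun j : I4 => gradient (HPIrobot a1 a2 b Im1 Im2 Ks KI qstar) (x t) (Sum.inr j))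
      = (0 : I4 → ℝ) := funext hg3
  have htop : ∀ j : I4, gradient (HPIrobot a1 a2 b Im1 Im2 Ks KI qstar) (x t) (Sum.inl j) = 0 := by
    intro j
    have h := hvz j
    rw [hsplit, hbot, Matrix.fromBlocks_mulVec] at h
    simp only [Sum.elim_inr, Sum.elim_comp_inl, Sum.elim_comp_inr, Matrix.mulVec_zero,
      add_zero, Pi.add_apply, Matrix.neg_mulVec, Matrix.one_mulVec, Pi.neg_apply,
      Pi.zero_apply] at h
    linarith
  have hKsu : Ks.mulVec (fun r => qlv (x t) r - qmv (x t) r) = 0 := by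
    funext i
    rw [← hg1 i]
    exact htop (Sum.inl i)
  have hu : (fun r => qlv (x t) r - qmv (x t) r) = 0 := posdef_mulVec_eq_zero hKs hKsu
  have hKIw : KI.mulVec (fun r => qmv (x t) r - qstar r) = 0 := by
    funext i
    have h := htop (Sum.inr i)
    rw [hg2 i] at h
    have h0 : Ks.mulVec (fun r => qlv (x t) r - qmv (x t) r) i = 0 := by rw [hKsu]; rfl
    rw [h0] at h
    simpa using h
  have hw : (fun r => qmv (x t) r - qstar r) = 0 := posdef_mulVec_eq_zero hKI hKIw
  constructor
  · funext i
    have h1 := congrFun hu i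
    have h2 := congrFun hw i
    simp only [Pi.zero_apply] at h1 h2
    simp only [qlv, qmv] at h1 h2 ⊢
    linarith
  · funext i
    have h2 := congrFun hw i
    simp only [Pi.zero_apply] at h2
    simp only [qmv] at h2 ⊢
    linarith


end
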